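/- For every n ≥ 1, L_n ⊎ {0,1,#}^ω = pref(F_n ⊎ {0,1,#}^*), i.e., an infinite word over Σ = {0,1,#,&} lies in L_n or contains no occurrence of & if and only if every nonempty finite prefix of it lies in F_n or contains no occurrence of &. -/
import Mathlib


/-- The length-`n` prefix `w_0 ⋯ w_{n-1}` of an infinite word `w`. -/
def prefixWord {α : Type} (w : ℕ → α) (n : ℕ) : List α :=
  (List.range n).map w

/-- Concatenation of a finite word `u` with an infinite word `v`. -/
def wcat {α : Type} (u : List α) (v : ℕ → α) : ℕ → α :=
  fun i => if h : i < u.length then u.get ⟨i, h⟩ else v (i - u.length)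

/-- The four-letter alphabet Σ = {0, 1, #, &}. -/
inductive Sig4 : Type where
  | zero : Sig4
  | one : Sig4
  | hash : Sig4
  | amp : Sig4
deriving DecidableEq

/-- Encoding of a bit as a letter in {0,1}. -/
def bitSym (b : Bool) : Sig4 := if b then Sig4.one else Sig4.zero

/-- The block `#w#` for a bit-string `w`. -/
def blk (w : List Bool) : List Sig4 :=
  Sig4.hash :: (w.map bitSym ++ [Sig4.hash])

/-- A finite word contains no occurrence of `&`. -/
def NoAmpL (u : List Sig4) : Prop := ∀ a ∈ u, a ≠ Sig4.amp

/-- An infinite word contains no occurrence of `&`. -/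
def NoAmpW (v : ℕ → Sig4) : Prop := ∀ i, v i ≠ Sig4.amp

/-- The finite word `p` occurs as a factor of the infinite word `v`. -/
def OccursInW (p : List Sig4) (v : ℕ → Sig4) : Prop :=
  ∃ i, prefixWord (fun j => v (i + j)) p.length = p

/-- The ω-language `L_n`: words `u · & · v` with `u ∈ {0,1,#}^*`, `v ∈ {0,1,#}^ω`
such that every block `#w#` (with `w ∈ {0,1}^n`) occurring in `v` also occurs in `u`. -/
def Ln (n : ℕ) : Set (ℕ → Sig4) :=
  { x | ∃ (u : List Sig4) (v : ℕ → Sig4), NoAmpL u ∧ NoAmpW v ∧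
      x = wcat (u ++ [Sig4.amp]) v ∧
      ∀ w : List Bool, w.length = n → OccursInW (blk w) v → blk w <:+: u }

/-- The language of finite words `F_n`: words `u · & · v` with `u, v ∈ {0,1,#}^*`
such that if the last `n+2` letters of `v` form a block `#w#` with `w ∈ {0,1}^n`,
then `#w#` occurs in `u`. -/
def Fn (n : ℕ) : Set (List Sig4) :=
  { x | ∃ u v : List Sig4, NoAmpL u ∧ NoAmpL v ∧
      x = u ++ Sig4.amp :: v ∧
      ∀ w : List Bool, w.length = n → blk w <:+ v → blk w <:+: u }

lemma length_prefixWord {α : Type} (x : ℕ → α) (m : ℕ) : (prefixWord x m).length = m := by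
  simp [prefixWord]

lemma getElem_prefixWord {α : Type} (x : ℕ → α) {m i : ℕ} (h : i < (prefixWord x m).length) :
    (prefixWord x m)[i] = x i := by
  simp [prefixWord] at h ⊢

lemma drop_prefixWord {α : Type} (x : ℕ → α) (m s : ℕ) :
    (prefixWord x m).drop s = prefixWord (fun j => x (s + j)) (m - s) := by
  apply List.ext_getElem
  · simp [length_prefixWord]
  · intro i h1 h2
    rw [List.getElem_drop, getElem_prefixWord, getElem_prefixWord]

lemma take_prefixWord {α : Type} (x : ℕ → α) {m s : ℕ} (h : s ≤ m) :
    (prefixWord x m).take s = prefixWord x s := by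
  apply List.ext_getElem
  · simp [length_prefixWord]; omega
  · intro i h1 h2
    rw [List.getElem_take, getElem_prefixWord, getElem_prefixWord]

lemma prefixWord_wcat_ge {α : Type} (u : List α) (v : ℕ → α) {m : ℕ} (h : u.length ≤ m) :
    prefixWord (wcat u v) m = u ++ prefixWord v (m - u.length) := by
  apply List.ext_getElem
  · simp [length_prefixWord]; omega
  · intro i h1 h2
    rw [getElem_prefixWord, List.getElem_append]
    simp only [wcat, List.get_eq_getElem]
    by_cases hi : i < u.length
    · rw [dif_pos hi, dif_pos hi]
    · rw [dif_neg hi, dif_neg hi, getElem_prefixWord]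

lemma prefixWord_wcat_le {α : Type} (u : List α) (v : ℕ → α) {m : ℕ} (h : m ≤ u.length) :
    prefixWord (wcat u v) m = u.take m := by
  apply List.ext_getElem
  · simp [length_prefixWord]; omega
  · intro i h1 h2
    rw [getElem_prefixWord, List.getElem_take]
    simp only [wcat, List.get_eq_getElem]
    rw [dif_pos (by simp [length_prefixWord] at h1; omega)]

lemma length_blk (w : List Bool) : (blk w).length = w.length + 2 := by
  simp [blk]

lemma suffix_prefixWord_iff {p : List Sig4} {v : ℕ → Sig4} {t : ℕ} (ht : p.length ≤ t) :
    p <:+ prefixWord v t ↔ prefixWord (fun j => v (t - p.length + j)) p.length = p := by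
  rw [List.suffix_iff_eq_drop, length_prefixWord, drop_prefixWord,
    show t - (t - p.length) = p.length from by omega]
  exact eq_comm

/-- In a word with exactly one marked `&`, any `&` position equals the length of the left part. -/
lemma amp_pos_eq {u' v' : List Sig4} (hu : NoAmpL u') (hv : NoAmpL v')
    {t : ℕ} (ht : t < (u' ++ Sig4.amp :: v').length)
    (hamp : (u' ++ Sig4.amp :: v')[t] = Sig4.amp) : t = u'.length := by
  rcases lt_trichotomy t u'.length with h | h | h
  · exact absurd hamp (hu _ (by rw [List.getElem_append_left h]; exact List.getElem_mem _))
  · exact h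
  · exfalso
    rw [List.getElem_append_right (by omega), List.getElem_cons,
      dif_neg (by omega)] at hamp
    exact hv _ (List.getElem_mem _) hamp

/-- For every n ≥ 1, L_n ⊎ {0,1,#}^ω = pref(F_n ⊎ {0,1,#}^*):
an infinite word over {0,1,#,&} lies in L_n or contains no occurrence of & iff
every nonempty finite prefix of it lies in F_n or contains no occurrence of &. -/
theorem Ln_union_eq_pref_Fn_union (n : ℕ) (hn : 1 ≤ n) :
    Ln n ∪ { v : ℕ → Sig4 | NoAmpW v } =
      { x : ℕ → Sig4 | ∀ m : ℕ, 0 < m →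
          (prefixWord x m ∈ Fn n ∨ NoAmpL (prefixWord x m)) } := by
  ext x
  simp only [Set.mem_union, Set.mem_setOf_eq]
  constructor
  · rintro (⟨u, v, hu, hv, hx, hfac⟩ | hno) m hm
    · subst hx
      by_cases hml : m ≤ u.length
      · right
        rw [prefixWord_wcat_le _ _ (by simp; omega),
          List.take_append_of_le_length hml]
        intro a ha
        exact hu a (List.mem_of_mem_take ha)
      · left
        push_neg at hml
        set t := m - u.length - 1 with htdef
        have hlen : (u ++ [Sig4.amp]).length ≤ m := by simp; omega
        rw [prefixWord_wcat_ge _ _ hlen]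
        refine ⟨u, prefixWord v t, hu, ?_, ?_, ?_⟩
        · intro a ha
          rcases (by simpa [prefixWord] using ha : ∃ i, i < t ∧ v i = a) with ⟨i, _, hi⟩
          rw [← hi]; exact hv i
        · have h1 : m - (u ++ [Sig4.amp]).length = t := by simp; omega
          rw [h1]
          simp
        · intro w hw hsuf
          have hlb : (blk w).length ≤ t := hsuf.length_le.trans_eq (length_prefixWord v t)
          apply hfac w hw
          exact ⟨t - (blk w).length, (suffix_prefixWord_iff hlb).mp hsuf⟩
    · right
      intro a ha
      rcases (by simpa [prefixWord] using ha : ∃ i, i < m ∧ x i = a) with ⟨i, _, hi⟩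
      rw [← hi]; exact hno i
  · intro h
    by_cases hno : NoAmpW x
    · right; exact hno
    · left
      simp only [NoAmpW, not_forall, not_not] at hno
      have hex : ∃ k, x k = Sig4.amp := hno
      classical
      set k := Nat.find hex with hk
      have hxk : x k = Sig4.amp := Nat.find_spec hex
      have hmin : ∀ i < k, x i ≠ Sig4.amp := fun i hi => Nat.find_min hex hi
      set u := prefixWord x k with hudef
      set v : ℕ → Sig4 := fun j => x (k + 1 + j) with hvdef
      have hxamp : ∀ m, k < m → ∀ (hkm : k < (prefixWord x m).length),
          (prefixWord x m)[k] = Sig4.amp := by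
        intro m hkm h'
        rw [getElem_prefixWord]; exact hxk
      -- key: any prefix of length m > k is in Fn, and its decomposition is canonical
      have hdec : ∀ m, k < m → ∃ v' : List Sig4, NoAmpL v' ∧
          v' = prefixWord v (m - k - 1) ∧
          (∀ w : List Bool, w.length = n → blk w <:+ v' → blk w <:+: u) := by
        intro m hkm
        have h0 : 0 < m := by omega
        rcases h m h0 with hF | hN
        · rcases hF with ⟨u', v', hu', hv', heq, hcond⟩
          have hkl : k < (prefixWord x m).length := by rw [length_prefixWord]; omega
          have hampk : (prefixWord x m)[k] = Sig4.amp := hxamp m hkm hkl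
          have hkl2 : k < (u' ++ Sig4.amp :: v').length := by rw [← heq]; exact hkl
          have hk' : k = u'.length :=
            amp_pos_eq hu' hv' hkl2 ((List.getElem_of_eq heq.symm hkl2).trans hampk)
          have hlen : (prefixWord x m).length = u'.length + 1 + v'.length := by
            rw [heq]; simp; omega
          refine ⟨v', hv', ?_, ?_⟩
          · have : v' = (prefixWord x m).drop (k + 1) := by
              rw [heq, hk']
              rw [show u'.length + 1 = (u' ++ [Sig4.amp]).length by simp]
              rw [show u' ++ Sig4.amp :: v' = (u' ++ [Sig4.amp]) ++ v' by simp]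
              rw [List.drop_left]
            rw [this, drop_prefixWord]
            rfl
          · intro w hw hs
            have hu'u : u' = u := by
              have : u' = (prefixWord x m).take k := by
                rw [heq, hk', List.take_left]
              rw [this, take_prefixWord x (by omega)]
            rw [← hu'u]
            exact hcond w hw hs
        · exfalso
          have hkl : k < (prefixWord x m).length := by rw [length_prefixWord]; omega
          exact hN _ (List.getElem_mem hkl) (hxamp m hkm hkl)
      have hvno : NoAmpW v := by
        intro j hj
        rcases hdec (k + 1 + j + 1) (by omega) with ⟨v', hv', hveq, _⟩
        apply hv' (v j) _ hj
        rw [hveq]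
        have : j < ((prefixWord v (k + 1 + j + 1 - k - 1))).length := by
          rw [length_prefixWord]; omega
        rw [show v j = (prefixWord v (k + 1 + j + 1 - k - 1))[j] from
          (getElem_prefixWord v this).symm]
        exact List.getElem_mem this
      have huno : NoAmpL u := by
        intro a ha
        rcases (by simpa [hudef, prefixWord] using ha : ∃ i, i < k ∧ x i = a) with ⟨i, hik, hi⟩
        rw [← hi]; exact hmin i hik
      refine ⟨u, v, huno, hvno, ?_, ?_⟩
      · funext i
        simp only [wcat, List.get_eq_getElem]
        have hul : u.length = k := length_prefixWord x k
        by_cases hik : i < (u ++ [Sig4.amp]).length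
        · rw [dif_pos hik]
          simp only [List.length_append, List.length_singleton, hul] at hik
          by_cases hik' : i < k
          · rw [List.getElem_append_left (by rw [hul]; exact hik')]
            rw [getElem_prefixWord]
          · have : i = k := by omega
            subst this
            rw [List.getElem_append_right (by omega)]
            simp [hul, hxk]
        · rw [dif_neg hik]
          simp only [List.length_append, List.length_singleton, hul] at hik ⊢
          rw [hvdef]
          simp only
          congr 1
          omega
      · intro w hw ⟨i, hocc⟩
        have hbl : (blk w).length = n + 2 := by rw [length_blk, hw]
        set m := k + 1 + i + (n + 2) with hmdef
        rcases hdec m (by omega) with ⟨v', _, hveq, hcond⟩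
        apply hcond w hw
        rw [hveq, show m - k - 1 = i + (n + 2) by omega]
        rw [suffix_prefixWord_iff (by omega)]
        rw [show i + (n + 2) - (blk w).length = i by omega]
        rw [hbl] at hocc ⊢
        exact hocc
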